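/- arXiv:1305.6448 — 2 statements merged into one kernel-verified Lean document; each statement's English description precedes it below -/
import Mathlib

section
/- Let {S_k} be a centered real-valued random walk with finite positive variance started from 0. For any a > 0, if E[S₁² e^{aS₁}] < ∞, then there exists a constant C_a > 0 such that for every b ≥ 0 and every x ≥ 0: P( S_{τ_b} − b > x ) ≤ C_a e^{-ax}, where τ_b := inf{j ≥ 0 : S_j > b}. -/
/-!
Let `D_n` be the gap `b - S_n`, frozen from the first time it becomes negative, i.e. from `τ_b`
on; it is a Markov chain driven by the i.i.d. steps. The potential `Φ(u) = e^{-a u}` for `u < 0`,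
`Φ(u) = K - A e^{-a u}` for `u ≥ 0` is superharmonic for this chain once `A` and `K` are large,
so `E Φ(D_n) ≤ Φ(b) ≤ K`. On the event `S_{τ_b} - b > x` we have `Φ(D_n) ≥ e^{a x}` for
`n ≥ τ_b`, and Markov's inequality gives the bound with `C = K`.

Superharmonicity at `d ≥ 0` rests on `E e^{a ξ} > 1` (strict Jensen, `ξ` being centred and
non-degenerate): for every `d`, either `E[e^{a ξ}; ξ ≤ d] ≥ 1 + β`, and the term `-A e^{-a u}`
compensates the overshoot, or `P(ξ > d) ≥ c`, and the constant `K` does.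
-/

open MeasureTheory ProbabilityTheory Filter
open scoped ENNReal Topology

noncomputable section

theorem ProbabilityTheory.IndepFun.lintegral_comp_eq {Ω α β : Type*} [MeasurableSpace Ω]
    [MeasurableSpace α] [MeasurableSpace β] {P : Measure Ω} [IsFiniteMeasure P]
    {X : Ω → α} {Y : Ω → β}
    (hXY : IndepFun X Y P) (hX : Measurable X) (hY : Measurable Y) {F : α × β → ℝ≥0∞}
    (hF : Measurable F) :
    ∫⁻ ω, F (X ω, Y ω) ∂P = ∫⁻ x, ∫⁻ y, F (x, y) ∂(P.map Y) ∂(P.map X) := by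
  rw [← lintegral_prod _ hF.aemeasurable, ← hXY.map_prod_eq_prod_map_map hX.aemeasurable
    hY.aemeasurable, lintegral_map hF (hX.prodMk hY)]

namespace Overshoot

open Real

section Chain

variable {α β : Type*}

def chain (g : α → β → α) (x₀ : α) (u : ℕ → β) : ℕ → α
  | 0 => x₀
  | n + 1 => g (chain g x₀ u n) (u n)

variable {Ω : Type*} [MeasurableSpace α] [mβ : MeasurableSpace β] {ξ : ℕ → Ω → β}
  {g : α → β → α}

lemma measurable_chain_past (hg : Measurable (Function.uncurry g)) (x₀ : α) (n : ℕ) :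
    Measurable[⨆ i ∈ Set.Iio n, mβ.comap (ξ i)]
      (fun ω => chain g x₀ (fun k => ξ k ω) n) := by
  induction n with
  | zero => exact measurable_const
  | succ n ih =>
    have hmono : (⨆ i ∈ Set.Iio n, mβ.comap (ξ i))
        ≤ ⨆ i ∈ Set.Iio (n + 1), mβ.comap (ξ i) :=
      biSup_mono fun i hi => Nat.lt_succ_of_lt hi
    have hξ : Measurable[⨆ i ∈ Set.Iio (n + 1), mβ.comap (ξ i)] (ξ n) :=
      Measurable.of_comap_le (le_biSup (fun i => mβ.comap (ξ i))
        (Set.mem_Iio.mpr n.lt_succ_self))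
    exact hg.comp ((ih.mono hmono le_rfl).prodMk hξ)

variable [MeasurableSpace Ω] {P : Measure Ω}

lemma indepFun_chain (hξ : ∀ i, Measurable (ξ i)) (hindep : iIndepFun ξ P)
    (hg : Measurable (Function.uncurry g)) (x₀ : α) (n : ℕ) :
    IndepFun (fun ω => chain g x₀ (fun k => ξ k ω) n) (ξ n) P := by
  have h := indep_iSup_of_disjoint (fun i => (hξ i).comap_le) hindep.iIndep
    (S := Set.Iio n) (T := {n}) (by simp)
  rw [IndepFun_iff_Indep]
  refine indep_of_indep_of_le_left ?_ (measurable_chain_past hg x₀ n).comap_le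
  simpa using h

theorem lintegral_chain_le [IsProbabilityMeasure P] (hξ : ∀ i, Measurable (ξ i))
    (hindep : iIndepFun ξ P) (hg : Measurable (Function.uncurry g)) {Φ : α → ℝ≥0∞}
    (hΦ : Measurable Φ) (hsuper : ∀ n x, ∫⁻ y, Φ (g x y) ∂(P.map (ξ n)) ≤ Φ x) (x₀ : α)
    (n : ℕ) : ∫⁻ ω, Φ (chain g x₀ (fun k => ξ k ω) n) ∂P ≤ Φ x₀ := by
  induction n with
  | zero => simp [chain]
  | succ n ih =>
    have hX : Measurable fun ω => chain g x₀ (fun k => ξ k ω) n :=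
      (measurable_chain_past hg x₀ n).mono (iSup₂_le fun i _ => (hξ i).comap_le) le_rfl
    calc ∫⁻ ω, Φ (chain g x₀ (fun k => ξ k ω) (n + 1)) ∂P
        = ∫⁻ x, ∫⁻ y, Φ (g x y) ∂(P.map (ξ n)) ∂(P.map _) :=
          (indepFun_chain hξ hindep hg x₀ n).lintegral_comp_eq hX (hξ n) (hΦ.comp hg)
      _ ≤ ∫⁻ x, Φ x ∂(P.map _) := lintegral_mono (hsuper n)
      _ = ∫⁻ ω, Φ (chain g x₀ (fun k => ξ k ω) n) ∂P := lintegral_map hΦ hX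
      _ ≤ Φ x₀ := ih

end Chain

section Gap

def gapStep (d s : ℝ) : ℝ := if 0 ≤ d then d - s else d

lemma measurable_gapStep : Measurable (Function.uncurry gapStep) :=
  Measurable.ite (measurableSet_le measurable_const measurable_fst)
    (measurable_fst.sub measurable_snd) measurable_fst

def firstPassage (b : ℝ) (u : ℕ → ℝ) : ℕ := sInf {j | b < ∑ k ∈ Finset.range j, u k}

variable {b : ℝ} {u : ℕ → ℝ}

lemma chain_gapStep_of_forall_le {n : ℕ} (h : ∀ j < n, ∑ k ∈ Finset.range j, u k ≤ b) :
    chain gapStep b u n = b - ∑ k ∈ Finset.range n, u k := by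
  induction n with
  | zero => simp [chain]
  | succ n ih =>
    rw [chain, ih fun j hj => h j (hj.trans n.lt_succ_self), gapStep,
      if_pos (sub_nonneg.mpr (h n n.lt_succ_self)), Finset.sum_range_succ]
    ring

lemma chain_gapStep_succ_of_neg {n : ℕ} (h : chain gapStep b u n < 0) :
    chain gapStep b u (n + 1) = chain gapStep b u n := by
  rw [chain, gapStep, if_neg h.not_ge]

lemma chain_gapStep_firstPassage_lt {x : ℝ}
    (h : x < (∑ j ∈ Finset.range (firstPassage b u), u j) - b) :
    chain gapStep b u (firstPassage b u) < -x := by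
  rw [chain_gapStep_of_forall_le (n := firstPassage b u) fun j hj =>
    not_lt.mp (Nat.notMem_of_lt_sInf hj)]
  linarith

end Gap

def potential (a A K u : ℝ) : ℝ :=
  if u < 0 then exp (-(a * u)) else K - A * exp (-(a * u))

lemma measurable_potential (a A K : ℝ) : Measurable (potential a A K) :=
  Measurable.ite measurableSet_Iio (by fun_prop) (by fun_prop)

lemma potential_nonneg {a A K : ℝ} (ha : 0 ≤ a) (hA : 0 ≤ A) (hAK : A ≤ K) (u : ℝ) :
    0 ≤ potential a A K u := by
  unfold potential
  split_ifs with hu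
  · positivity
  · have : exp (-(a * u)) ≤ 1 := exp_le_one_iff.mpr (by nlinarith)
    nlinarith

lemma potential_le {a A K u : ℝ} (hA : 0 ≤ A) (hu : 0 ≤ u) : potential a A K u ≤ K := by
  rw [potential, if_neg hu.not_gt]
  nlinarith [exp_pos (-(a * u))]

lemma exp_le_potential {a A K u x : ℝ} (ha : 0 ≤ a) (hx : 0 ≤ x) (hu : u < -x) :
    exp (a * x) ≤ potential a A K u := by
  rw [potential, if_pos (by linarith)]
  exact exp_le_exp.mpr (by nlinarith)

lemma exists_add_le_setIntegral_Iic_or_le_measureReal_Ioi {μ : Measure ℝ} [IsFiniteMeasure μ]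
    {f : ℝ → ℝ} (hf : Integrable f μ) (hf_mono : Monotone f) (hf_pos : ∀ s, 0 < f s) {L : ℝ}
    (hL : L < ∫ s, f s ∂μ) :
    ∃ β > 0, ∃ c > 0, ∀ y, L + β ≤ ∫ s in Set.Iic y, f s ∂μ ∨ c ≤ μ.real (Set.Ioi y) := by
  set β := (∫ s, f s ∂μ - L) / 3 with hβ_def
  have hβ : 0 < β := by positivity
  have htendsto : Tendsto (fun y => ∫ s in Set.Iic y, f s ∂μ) atTop (𝓝 (∫ s, f s ∂μ)) := by
    simpa [Set.iUnion_Iic] using tendsto_setIntegral_of_monotone (μ := μ)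
      (fun y => measurableSet_Iic) (fun _ _ h => Set.Iic_subset_Iic.mpr h) hf.integrableOn
  have hJ : L + 2 * β < ∫ s, f s ∂μ := by rw [hβ_def]; linarith
  obtain ⟨M, hM⟩ := (htendsto.eventually (lt_mem_nhds hJ)).exists
  refine ⟨β, hβ, β / f M, div_pos hβ (hf_pos M), fun y => ?_⟩
  rcases le_or_gt M y with hMy | hyM
  · left
    have : ∫ s in Set.Iic M, f s ∂μ ≤ ∫ s in Set.Iic y, f s ∂μ :=
      setIntegral_mono_set hf.integrableOn (ae_of_all _ fun s => (hf_pos s).le)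
        (Set.Iic_subset_Iic.mpr hMy).eventuallyLE
    linarith
  by_contra! h
  have hIoc : ∫ s in Set.Ioc y M, f s ∂μ ≤ f M * μ.real (Set.Ioi y) := calc
    ∫ s in Set.Ioc y M, f s ∂μ ≤ ∫ s in Set.Ioc y M, f M ∂μ :=
      setIntegral_mono_on hf.integrableOn (integrable_const _).integrableOn measurableSet_Ioc
        fun s hs => hf_mono hs.2
    _ = f M * μ.real (Set.Ioc y M) := by rw [setIntegral_const, smul_eq_mul, mul_comm]
    _ ≤ f M * μ.real (Set.Ioi y) :=
      mul_le_mul_of_nonneg_left (measureReal_mono Set.Ioc_subset_Ioi_self) (hf_pos M).le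
  have hsplit : ∫ s in Set.Iic M, f s ∂μ
      = ∫ s in Set.Iic y, f s ∂μ + ∫ s in Set.Ioc y M, f s ∂μ := by
    rw [← Set.Iic_union_Ioc_eq_Iic hyM.le,
      setIntegral_union (Set.Iic_disjoint_Ioc le_rfl) measurableSet_Ioc hf.integrableOn
        hf.integrableOn]
  have := (lt_div_iff₀' (hf_pos M)).mp h.2
  linarith

lemma potential_sub_eq_piecewise (a A K d : ℝ) [DecidablePred (· ∈ Set.Ioi d)] :
    (fun s => potential a A K (d - s)) = (Set.Ioi d).piecewise
      (fun s => exp (-(a * d)) * exp (a * s)) (fun s => K - A * exp (-(a * d)) * exp (a * s)) := by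
  ext s
  have hexp_sub : exp (-(a * (d - s))) = exp (-(a * d)) * exp (a * s) := by
    rw [← exp_add]; ring_nf
  simp only [potential, Set.piecewise, Set.mem_Ioi, sub_neg, hexp_sub, mul_assoc]

section Potential

variable {μ : Measure ℝ} [IsProbabilityMeasure μ] {a A K : ℝ}

lemma integrable_potential_sub (hexp : Integrable (fun s => exp (a * s)) μ) (d : ℝ) :
    Integrable (fun s => potential a A K (d - s)) μ := by
  classical
  rw [potential_sub_eq_piecewise]
  exact Integrable.piecewise measurableSet_Ioi (hexp.const_mul _).integrableOn
    ((integrable_const K).sub (hexp.const_mul _)).integrableOn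

lemma integral_potential_sub (hexp : Integrable (fun s => exp (a * s)) μ) (d : ℝ) :
    ∫ s, potential a A K (d - s) ∂μ = exp (-(a * d)) * ∫ s in Set.Ioi d, exp (a * s) ∂μ
      + K * (1 - μ.real (Set.Ioi d)) - A * exp (-(a * d)) * ∫ s in Set.Iic d, exp (a * s) ∂μ := by
  classical
  have h₁ : IntegrableOn (fun s => exp (-(a * d)) * exp (a * s)) (Set.Ioi d) μ :=
    (hexp.const_mul _).integrableOn
  have h₂ : IntegrableOn (fun s => K - A * exp (-(a * d)) * exp (a * s)) (Set.Ioi d)ᶜ μ :=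
    ((integrable_const K).sub (hexp.const_mul _)).integrableOn
  rw [potential_sub_eq_piecewise, integral_piecewise measurableSet_Ioi h₁ h₂, Set.compl_Ioi,
    integral_const_mul,
    integral_sub (integrable_const K).integrableOn (hexp.const_mul _).integrableOn,
    integral_const_mul, setIntegral_const, smul_eq_mul, ← Set.compl_Ioi,
    measureReal_compl measurableSet_Ioi, probReal_univ]
  ring

lemma integral_potential_sub_le (hexp : Integrable (fun s => exp (a * s)) μ) {β c d : ℝ}
    (ha : 0 ≤ a) (hA : 0 ≤ A) (hK : 0 ≤ K) (hβ : 0 ≤ β)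
    (hAβ : ∫ s, exp (a * s) ∂μ ≤ A * β) (hKc : ∫ s, exp (a * s) ∂μ + A ≤ K * c)
    (hdich : 1 + β ≤ ∫ s in Set.Iic d, exp (a * s) ∂μ ∨ c ≤ μ.real (Set.Ioi d)) (hd : 0 ≤ d) :
    ∫ s, potential a A K (d - s) ∂μ ≤ potential a A K d := by
  set E := ∫ s, exp (a * s) ∂μ
  set I := ∫ s in Set.Iic d, exp (a * s) ∂μ
  set r := μ.real (Set.Ioi d)
  have hsum : ∫ s in Set.Ioi d, exp (a * s) ∂μ = E - I := by
    have := integral_add_compl (measurableSet_Ioi (a := d)) hexp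
    rw [Set.compl_Ioi] at this
    linarith
  have hI : 0 ≤ I := setIntegral_nonneg measurableSet_Iic fun s _ => (exp_pos _).le
  have hr : 0 ≤ r := measureReal_nonneg
  have hexp_d : exp (-(a * d)) ≤ 1 := exp_le_one_iff.mpr (by nlinarith)
  have hexp_d0 : 0 < exp (-(a * d)) := exp_pos _
  rw [integral_potential_sub hexp d, hsum, potential, if_neg hd.not_gt]
  suffices exp (-(a * d)) * (E - (A + 1) * I + A) ≤ K * r by nlinarith
  rcases hdich with hI₁ | hc
  · have : E - (A + 1) * I + A ≤ 0 := by nlinarith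
    nlinarith
  · have hE : 0 ≤ E := integral_nonneg fun s => (exp_pos _).le
    have : exp (-(a * d)) * (E - (A + 1) * I + A) ≤ E + A := by
      rcases le_total 0 (E - (A + 1) * I + A) with h | h <;> nlinarith
    nlinarith

lemma lintegral_potential_gapStep_le (ha : 0 ≤ a) (hA : 0 ≤ A) (hAK : A ≤ K)
    (hexp : Integrable (fun s => exp (a * s)) μ) {β c : ℝ} (hβ : 0 ≤ β)
    (hAβ : ∫ s, exp (a * s) ∂μ ≤ A * β) (hKc : ∫ s, exp (a * s) ∂μ + A ≤ K * c)
    (hdich : ∀ y, 1 + β ≤ ∫ s in Set.Iic y, exp (a * s) ∂μ ∨ c ≤ μ.real (Set.Ioi y)) (d : ℝ) :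
    ∫⁻ s, ENNReal.ofReal (potential a A K (gapStep d s)) ∂μ
      ≤ ENNReal.ofReal (potential a A K d) := by
  by_cases hd : 0 ≤ d
  · simp only [gapStep, if_pos hd]
    rw [← ofReal_integral_eq_lintegral_ofReal (integrable_potential_sub hexp d)
      (ae_of_all _ fun s => potential_nonneg ha hA hAK _)]
    exact ENNReal.ofReal_le_ofReal <| integral_potential_sub_le hexp ha hA (hA.trans hAK) hβ
      hAβ hKc (hdich d) hd
  · simp [gapStep, if_neg hd]

theorem exists_potential_superharmonic (ha : 0 ≤ a)
    (hexp : Integrable (fun s => exp (a * s)) μ) (hE : 1 < ∫ s, exp (a * s) ∂μ) :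
    ∃ A K, 0 < A ∧ A ≤ K ∧ ∀ d, ∫⁻ s, ENNReal.ofReal (potential a A K (gapStep d s)) ∂μ
      ≤ ENNReal.ofReal (potential a A K d) := by
  obtain ⟨β, hβ, c, hc, hdich⟩ := exists_add_le_setIntegral_Iic_or_le_measureReal_Ioi hexp
    (fun s t hst => exp_le_exp.mpr (mul_le_mul_of_nonneg_left hst ha)) (fun s => exp_pos _) hE
  set E := ∫ s, exp (a * s) ∂μ
  have hA : 0 < E / β := div_pos (by linarith) hβ
  refine ⟨E / β, E / β + (E + E / β) / c, hA, le_add_of_nonneg_right (by positivity),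
    lintegral_potential_gapStep_le ha hA.le (le_add_of_nonneg_right (by positivity)) hexp hβ.le
      (by rw [div_mul_cancel₀ _ hβ.ne']) ?_ hdich⟩
  rw [add_mul, div_mul_cancel₀ _ hc.ne']
  nlinarith

end Potential

section RandomWalk

variable {Ω : Type*} [MeasurableSpace Ω] {P : Measure Ω} {a : ℝ}

lemma integrable_exp_mul_of_integrable_sq_mul_exp [IsFiniteMeasure P] {X : Ω → ℝ}
    (hX : AEStronglyMeasurable X P) (ha : 0 ≤ a)
    (h : Integrable (fun ω => X ω ^ 2 * exp (a * X ω)) P) :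
    Integrable (fun ω => exp (a * X ω)) P := by
  refine Integrable.mono' ((integrable_const (exp a)).add h)
    (continuous_exp.comp_aestronglyMeasurable (hX.const_mul a)) (ae_of_all _ fun ω => ?_)
  rw [norm_of_nonneg (exp_pos _).le, Pi.add_apply]
  have hexp_pos := exp_pos (a * X ω)
  rcases le_or_gt (X ω) 1 with hX1 | hX1
  · have : exp (a * X ω) ≤ exp a := exp_le_exp.mpr (by nlinarith)
    nlinarith [sq_nonneg (X ω)]
  · have : 1 ≤ X ω ^ 2 := by nlinarith
    nlinarith [exp_pos a]

variable [IsProbabilityMeasure P]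

lemma one_lt_integral_exp_mul {X : Ω → ℝ} (hX : Integrable X P) (hmean : ∫ ω, X ω ∂P = 0)
    (hX0 : ¬ X =ᵐ[P] 0) (ha : a ≠ 0) (hexp : Integrable (fun ω => exp (a * X ω)) P) :
    1 < ∫ ω, exp (a * X ω) ∂P := by
  have hexp₁ : Integrable (fun ω => exp (a * X ω) - 1) P := hexp.sub (integrable_const 1)
  have hg : Integrable (fun ω => exp (a * X ω) - 1 - a * X ω) P := hexp₁.sub (hX.const_mul a)
  have hg_int : ∫ ω, (exp (a * X ω) - 1 - a * X ω) ∂P = ∫ ω, exp (a * X ω) ∂P - 1 := by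
    rw [integral_sub hexp₁ (hX.const_mul a),
      integral_sub hexp (integrable_const 1), integral_const_mul, hmean]
    simp
  -- `exp t ≥ 1 + t`, with equality only at `t = 0`
  have hsupp : Function.support (fun ω => exp (a * X ω) - 1 - a * X ω) = {ω | X ω ≠ 0} := by
    ext ω
    simp only [Function.mem_support, Set.mem_ofPred_eq]
    refine ⟨fun h hX => h (by simp [hX]), fun hX => ?_⟩
    linarith [add_one_lt_exp (mul_ne_zero ha hX)]
  have hpos : 0 < ∫ ω, (exp (a * X ω) - 1 - a * X ω) ∂P := by
    rw [integral_pos_iff_support_of_nonneg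
      (fun ω => by simp only [Pi.zero_apply]; linarith [add_one_le_exp (a * X ω)]) hg,
      hsupp, pos_iff_ne_zero]
    exact fun h => hX0 (ae_iff.mpr (by simpa using h))
  linarith

variable {ξ : ℕ → Ω → ℝ} {A K b x : ℝ}

lemma measure_chain_gapStep_lt_le (hξ : ∀ i, Measurable (ξ i)) (hindep : iIndepFun ξ P)
    (ha : 0 ≤ a) (hA : 0 ≤ A)
    (hsuper : ∀ n d, ∫⁻ s, ENNReal.ofReal (potential a A K (gapStep d s)) ∂(P.map (ξ n))
      ≤ ENNReal.ofReal (potential a A K d)) (hb : 0 ≤ b) (hx : 0 ≤ x) (n : ℕ) :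
    P {ω | chain gapStep b (fun k => ξ k ω) n < -x} ≤ ENNReal.ofReal (K * exp (-(a * x))) := by
  have hΦ : Measurable fun d => ENNReal.ofReal (potential a A K d) :=
    ENNReal.measurable_ofReal.comp (measurable_potential a A K)
  have hD : Measurable fun ω => chain gapStep b (fun k => ξ k ω) n :=
    (measurable_chain_past measurable_gapStep b n).mono
      (iSup₂_le fun i _ => (hξ i).comap_le) le_rfl
  calc P {ω | chain gapStep b (fun k => ξ k ω) n < -x}
      ≤ P {ω | ENNReal.ofReal (exp (a * x))
          ≤ ENNReal.ofReal (potential a A K (chain gapStep b (fun k => ξ k ω) n))} :=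
        measure_mono fun ω hω => ENNReal.ofReal_le_ofReal (exp_le_potential ha hx hω)
    _ ≤ (∫⁻ ω, ENNReal.ofReal (potential a A K (chain gapStep b (fun k => ξ k ω) n)) ∂P)
          / ENNReal.ofReal (exp (a * x)) :=
        meas_ge_le_lintegral_div (hΦ.comp hD).aemeasurable
          (ENNReal.ofReal_pos.mpr (exp_pos _)).ne' ENNReal.ofReal_ne_top
    _ ≤ ENNReal.ofReal K / ENNReal.ofReal (exp (a * x)) := by
        gcongr
        exact (lintegral_chain_le hξ hindep measurable_gapStep hΦ hsuper b n).trans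
          (ENNReal.ofReal_le_ofReal (potential_le hA hb))
    _ = ENNReal.ofReal (K * exp (-(a * x))) := by
        rw [← ENNReal.ofReal_div_of_pos (exp_pos _), exp_neg, div_eq_mul_inv]

theorem measure_overshoot_gt_le (hξ : ∀ i, Measurable (ξ i)) (hindep : iIndepFun ξ P)
    (ha : 0 ≤ a) (hA : 0 ≤ A)
    (hsuper : ∀ n d, ∫⁻ s, ENNReal.ofReal (potential a A K (gapStep d s)) ∂(P.map (ξ n))
      ≤ ENNReal.ofReal (potential a A K d)) (hb : 0 ≤ b) (hx : 0 ≤ x) :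
    P {ω | x < (∑ j ∈ Finset.range (firstPassage b fun k => ξ k ω), ξ j ω) - b}
      ≤ ENNReal.ofReal (K * exp (-(a * x))) := by
  set Bad : ℕ → Set Ω := fun n => {ω | chain gapStep b (fun k => ξ k ω) n < -x}
  -- once the gap is negative the chain is frozen, so the events `Bad n` increase
  have hmono : Monotone Bad := monotone_nat_of_le_succ fun n ω (hω : _ < -x) => by
    change _ < -x
    rwa [chain_gapStep_succ_of_neg (hω.trans_le (neg_nonpos.mpr hx))]
  calc P {ω | x < (∑ j ∈ Finset.range (firstPassage b fun k => ξ k ω), ξ j ω) - b}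
      ≤ P (⋃ n, Bad n) :=
        measure_mono fun ω hω => Set.mem_iUnion.mpr ⟨_, chain_gapStep_firstPassage_lt hω⟩
    _ = ⨆ n, P (Bad n) := hmono.measure_iUnion
    _ ≤ ENNReal.ofReal (K * exp (-(a * x))) :=
        iSup_le (measure_chain_gapStep_lt_le hξ hindep ha hA hsuper hb hx)

end RandomWalk

end Overshoot

open Overshoot Real

theorem statement6_general {Ω : Type} [MeasurableSpace Ω] (P : Measure Ω) [IsProbabilityMeasure P]
    (ξ : ℕ → Ω → ℝ) (hmeas : ∀ i, Measurable (ξ i))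
    (hindep : iIndepFun ξ P)
    (hident : ∀ i, P.map (ξ i) = P.map (ξ 0))
    (hint : Integrable (ξ 0) P) (hcent : ∫ ω, ξ 0 ω ∂P = 0)
    (hvar : 0 < variance (ξ 0) P)
    (a : ℝ) (ha : 0 < a)
    (hexp : Integrable (fun ω => (ξ 0 ω) ^ 2 * Real.exp (a * ξ 0 ω)) P) :
    ∃ C > (0:ℝ), ∀ b : ℝ, 0 ≤ b → ∀ x : ℝ, 0 ≤ x →
      P {ω | x <
          (∑ j ∈ Finset.range (sInf {j : ℕ | b < ∑ k ∈ Finset.range j, ξ k ω}), ξ j ω) - b}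
        ≤ ENNReal.ofReal (C * Real.exp (-(a * x))) := by
  have hξ₀ := (hmeas 0).aemeasurable (μ := P)
  have : IsProbabilityMeasure (P.map (ξ 0)) := Measure.isProbabilityMeasure_map hξ₀
  have hexpP := integrable_exp_mul_of_integrable_sq_mul_exp hξ₀.aestronglyMeasurable ha.le hexp
  have hexpμ : Integrable (fun s => exp (a * s)) (P.map (ξ 0)) :=
    (integrable_map_measure (by fun_prop) hξ₀).mpr hexpP
  have hnondeg : ¬ ξ 0 =ᵐ[P] 0 := fun h => hvar.ne' (by rw [variance_congr h, variance_zero])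
  have h1 : 1 < ∫ s, exp (a * s) ∂(P.map (ξ 0)) := by
    rw [integral_map hξ₀ (by fun_prop)]
    exact one_lt_integral_exp_mul hint hcent hnondeg ha.ne' hexpP
  obtain ⟨A, K, hA, hAK, hsuper⟩ := exists_potential_superharmonic ha.le hexpμ h1
  exact ⟨K, hA.trans_le hAK, fun b hb x hx =>
    measure_overshoot_gt_le hmeas hindep ha.le hA.le (fun n => hident n ▸ hsuper) hb hx⟩

/-- **Lemma 2.1, inequality (2.8)** (exponential bound on the overshoot).  Let `S` be a
centered random walk with finite positive variance started from `0` (so `S_n = Σ_{j<n} ξ_j`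
with `ξ` i.i.d.).  For any `a > 0`, if `E[S₁² e^{a S₁}] < ∞` then there is `C_a > 0` such
that for every `b ≥ 0` and `x ≥ 0`: `P(S_{τ_b} − b > x) ≤ C_a e^{-a x}`, where
`τ_b := inf{j ≥ 0 : S_j > b}`. -/
theorem statement6 {Ω : Type} [MeasurableSpace Ω] (P : Measure Ω) [IsProbabilityMeasure P]
    (ξ : ℕ → Ω → ℝ) (hmeas : ∀ i, Measurable (ξ i))
    (hindep : iIndepFun ξ P)
    (hident : ∀ i, P.map (ξ i) = P.map (ξ 0))
    (hint : Integrable (ξ 0) P) (hcent : ∫ ω, ξ 0 ω ∂P = 0)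
    (hL2 : MemLp (ξ 0) 2 P) (hvar : 0 < variance (ξ 0) P)
    (a : ℝ) (ha : 0 < a)
    (hexp : Integrable (fun ω => (ξ 0 ω) ^ 2 * Real.exp (a * ξ 0 ω)) P) :
    ∃ C > (0:ℝ), ∀ b : ℝ, 0 ≤ b → ∀ x : ℝ, 0 ≤ x →
      P {ω | x <
          (∑ j ∈ Finset.range (sInf {j : ℕ | b < ∑ k ∈ Finset.range j, ξ k ω}), ξ j ω) - b}
        ≤ ENNReal.ofReal (C * Real.exp (-(a * x))) :=
  statement6_general P ξ hmeas hindep hident hint hcent hvar a ha hexp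
end
end

section
/- Assume (1.10) and the Böttcher-case conditions (p₀ = p₁ = 0 and sup_{|u|=1} V(u) ≤ K a.s.), and let Z ≥ 0 be a non-trivial solution of the cascade equation, with h(t) := −log E[e^{-tZ}]. Then for every r > 1: E[e^{-rZ}] ≤ exp(−h(e^{-K}) r^β), where β := sup{a > 0 : P(Σ_{|u|=1} e^{-aV(u)} ≥ 1) = 1}. -/
open MeasureTheory ProbabilityTheory Filter Set
open scoped ENNReal NNReal Topology Classical

noncomputable section

/-- A branching random walk on `ℝ` in the Ulam–Harris encoding: every potential individual
`u : List ℕ` carries an independent copy of the reproduction point process `Θ`, described by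
its (possibly infinite) number of children `ν u` and the displacements `X u · i` of the
children.  All these copies are i.i.d. -/
structure BRW (Ω : Type) [MeasurableSpace Ω] where
  P : Measure Ω
  isProb : IsProbabilityMeasure P
  ν : List ℕ → Ω → ℕ∞
  X : List ℕ → Ω → ℕ → ℝ
  meas_ν : ∀ u, Measurable (ν u)
  meas_X : ∀ u i, Measurable fun ω => X u ω i
  indep : iIndepFun (fun u ω => (ν u ω, X u ω)) P
  ident : ∀ u, P.map (fun ω => (ν u ω, X u ω)) = P.map fun ω => (ν [] ω, X [] ω)

namespace BRW

variable {Ω : Type} [MeasurableSpace Ω] (b : BRW Ω)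

/-- `u` belongs to the random genealogical tree `𝕋`. -/
def mem (ω : Ω) (u : List ℕ) : Prop :=
  ∀ k < u.length, (u.getD k 0 : ℕ∞) < b.ν (u.take k) ω

/-- Position `V(u)` of the individual `u`. -/
def V (ω : Ω) (u : List ℕ) : ℝ :=
  ∑ k ∈ Finset.range u.length, b.X (u.take k) ω (u.getD k 0)

/-- Minimal position `𝕄_n` at generation `n` (`= ⊤` if the generation is empty). -/
def M (n : ℕ) (ω : Ω) : EReal :=
  ⨅ u ∈ {u : List ℕ | u.length = n ∧ b.mem ω u}, (b.V ω u : EReal)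

/-- `Σ_{|u|=1} f(V(u))`, as a sum in `ℝ≥0∞`. -/
def lsum1 (f : ℝ → ℝ≥0∞) (ω : Ω) : ℝ≥0∞ :=
  ∑' i : ℕ, if (i : ℕ∞) < b.ν [] ω then f (b.X [] ω i) else 0

/-- The survival event `S = {𝕋 is infinite}`. -/
def survival : Set Ω := {ω | {u : List ℕ | b.mem ω u}.Infinite}

/-- The extinction probability `q`. -/
def q : ℝ := (b.P b.survivalᶜ).toReal

/-- `ζ = Σ_{|u|=1} e^{-V(u)}`. -/
def zeta (ω : Ω) : ℝ≥0∞ := b.lsum1 (fun x => ENNReal.ofReal (Real.exp (-x))) ω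

/-- `ζ̃ = Σ_{|u|=1} V(u)⁺ e^{-V(u)}`. -/
def zetaTilde (ω : Ω) : ℝ≥0∞ :=
  b.lsum1 (fun x => ENNReal.ofReal (max x 0 * Real.exp (-x))) ω

/-- The boundary case assumptions (1.1):
`E[ν] ∈ (1,∞]`, `E[Σ_{|u|=1} e^{-V(u)}] = 1` and `E[Σ_{|u|=1} V(u) e^{-V(u)}] = 0`
(the last one expressed through positive and negative parts). -/
def BoundaryCase : Prop :=
  1 < ∫⁻ ω, (b.ν [] ω : ℝ≥0∞) ∂b.P ∧
  ∫⁻ ω, b.zeta ω ∂b.P = 1 ∧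
  ∫⁻ ω, b.lsum1 (fun x => ENNReal.ofReal (x * Real.exp (-x))) ω ∂b.P
    = ∫⁻ ω, b.lsum1 (fun x => ENNReal.ofReal (-x * Real.exp (-x))) ω ∂b.P ∧
  ∫⁻ ω, b.lsum1 (fun x => ENNReal.ofReal (x * Real.exp (-x))) ω ∂b.P ≠ ⊤

/-- The integrability condition (1.2). -/
def IntCond : Prop :=
  ∫⁻ ω, b.lsum1 (fun x => ENNReal.ofReal (x ^ 2 * Real.exp (-x))) ω ∂b.P ≠ ⊤ ∧
  ∫⁻ ω, (b.zeta ω * ENNReal.ofReal (max (Real.log (b.zeta ω).toReal) 0 ^ 2)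
      + b.zetaTilde ω * ENNReal.ofReal (max (Real.log (b.zetaTilde ω).toReal) 0)) ∂b.P ≠ ⊤

/-- The stopping line `L_λ = {u ∈ 𝕋 : τ_λ(u) = |u|}`: individuals whose position exceeds `λ`
for the first time along their ancestral line at their own generation. -/
def line (lam : ℝ) (ω : Ω) : Set (List ℕ) :=
  {u | u ≠ [] ∧ b.mem ω u ∧ (∀ i, 1 ≤ i → i < u.length → b.V ω (u.take i) ≤ lam) ∧
    lam < b.V ω u}

/-- `L_λ^{(a)} = {u ∈ L_λ : V(u) ≤ λ + a}`. -/
def lineA (a lam : ℝ) (ω : Ω) : Set (List ℕ) :=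
  {u | u ∈ b.line lam ω ∧ b.V ω u ≤ lam + a}

/-- The law of the reproduction point process `Θ`. -/
def firstGenLaw : Measure (ℕ∞ × (ℕ → ℝ)) := b.P.map fun ω => (b.ν [] ω, b.X [] ω)

/-- `μ` is the law of a nontrivial nonnegative solution `Z` of the smoothing fixed point
equation `Z =_d Σ_{|u|=1} e^{-V(u)} Z^{(u)}` associated with the point process of `b`. -/
def IsCascadeSolution (μ : Measure ℝ) : Prop :=
  IsProbabilityMeasure μ ∧ μ {x | x < 0} = 0 ∧ μ ({0}ᶜ : Set ℝ) ≠ 0 ∧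
  ∃ (Ω' : Type) (_mΩ' : MeasurableSpace Ω') (P' : Measure Ω')
    (ν' : Ω' → ℕ∞) (X' : Ω' → ℕ → ℝ) (Z : ℕ → Ω' → ℝ),
    IsProbabilityMeasure P' ∧
    P'.map (fun ω => (ν' ω, X' ω)) = b.firstGenLaw ∧
    (∀ i, P'.map (Z i) = μ) ∧
    iIndepFun Z P' ∧
    IndepFun (fun ω => (ν' ω, X' ω)) (fun ω (i : ℕ) => Z i ω) P' ∧
    P'.map (fun ω => ∑' i : ℕ, if (i : ℕ∞) < ν' ω then Real.exp (-(X' ω i)) * Z i ω else 0)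
      = μ

end BRW

/-- `q ^ (n-1)` for `n : ℕ∞`, with the convention `q ^ ∞ = 0`. -/
def qpowPred (q : ℝ) (n : ℕ∞) : ℝ := if n = ⊤ then 0 else q ^ (n.toNat - 1)

namespace BRW

variable {Ω : Type} [MeasurableSpace Ω] (b : BRW Ω)

/-- The Schröder case condition (1.5): `E[1_{(ν ≥ 1)} q^{ν-1} Σ_{|u|=1} e^{γ V(u)}] = 1`,
for a constant `γ > 0`. -/
def Schroeder (γ : ℝ) : Prop :=
  0 < γ ∧
  ∫⁻ ω, (if 1 ≤ b.ν [] ω then ENNReal.ofReal (qpowPred b.q (b.ν [] ω)) else 0)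
      * b.lsum1 (fun x => ENNReal.ofReal (Real.exp (γ * x))) ω ∂b.P = 1

/-- Condition (1.6): `E[Σ_{|u|=1} e^{a V(u)}] < ∞` for some `a > γ`. -/
def Cond16 (γ : ℝ) : Prop :=
  ∃ a > γ, ∫⁻ ω, b.lsum1 (fun x => ENNReal.ofReal (Real.exp (a * x))) ω ∂b.P ≠ ⊤

/-- Condition (1.10): `E[Σ_{|u|=1} e^{-χ V(u)}] ≤ 1` for a constant `χ ∈ (0,1]`, together
with `E[ν] ∈ (1,∞]`. -/
def Cond110 (χ : ℝ) : Prop :=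
  0 < χ ∧ χ ≤ 1 ∧
  ∫⁻ ω, b.lsum1 (fun x => ENNReal.ofReal (Real.exp (-(χ * x)))) ω ∂b.P ≤ 1 ∧
  1 < ∫⁻ ω, (b.ν [] ω : ℝ≥0∞) ∂b.P

/-- The Böttcher case conditions: `p₀ = p₁ = 0` and `sup_{|u|=1} V(u) ≤ K` a.s. -/
def Boettcher (K : ℝ) : Prop :=
  b.P {ω | b.ν [] ω = 0} = 0 ∧ b.P {ω | b.ν [] ω = 1} = 0 ∧
  0 < K ∧ ∀ᵐ ω ∂b.P, ∀ i : ℕ, (i : ℕ∞) < b.ν [] ω → b.X [] ω i ≤ K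

/-- The parameter `β := sup{a > 0 : P(Σ_{|u|=1} e^{-a V(u)} ≥ 1) = 1}` of the Böttcher case. -/
def betaParam : ℝ :=
  sSup {a : ℝ | 0 < a ∧
    b.P {ω | 1 ≤ b.lsum1 (fun x => ENNReal.ofReal (Real.exp (-(a * x)))) ω} = 1}

end BRW

/-- `e^{-a #S}`, with the convention `e^{-∞} = 0`. -/
def expNegMulCard (a : ℝ) (S : Set (List ℕ)) : ℝ :=
  if S.Infinite then 0 else Real.exp (-(a * S.ncard))

/-- `q ^ #S`, with the convention `q ^ ∞ = 0`. -/
def powCard (q : ℝ) (S : Set (List ℕ)) : ℝ :=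
  if S.Infinite then 0 else q ^ S.ncard

/-!
Write `L(t) = E[e^{-tZ}]`. The first generation is a.s. finite, so the fixed-point equation gives
`L(t) = E[Π_{|u|=1} L(t e^{-V(u)})]`. Fix `a` with `Σ_{|u|=1} e^{-a V(u)} ≥ 1` a.s. and put
`q = L(e^{-K})`. The bound `L(r) ≤ q ^ r ^ a` is proved on `[e^{-K}, e^{nδ}]` by induction on `n`:
replacing every `V(u)` by `max (V(u), δ)` only increases the product, brings each argument
`t e^{-V(u)}` back into the previous interval, and, since there are at least two children, all
below `K`, keeps `Σ e^{-a V(u)} ≥ 1` once `e^{-aδ} + e^{-aK} ≥ 1`. The bound is a closed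
condition on `a`, so it passes to the supremum `β`, and `q ^ r ^ β = exp (-h(e^{-K}) r ^ β)`.
-/

open Finset Real

lemma ENat.natCast_lt_iff_lt_toNat {n : ℕ∞} (hn : n ≠ ⊤) (i : ℕ) : (i : ℕ∞) < n ↔ i < n.toNat := by
  lift n to ℕ using hn
  simp

lemma Real.sSup_mem_of_isClosed {s C : Set ℝ} (hC : IsClosed C) (hs : s ⊆ C) (h0 : 0 ∈ C) :
    sSup s ∈ C := by
  rcases s.eq_empty_or_nonempty with rfl | hne
  · rwa [Real.sSup_empty]
  by_cases hbdd : BddAbove s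
  · exact hC.closure_subset_iff.2 hs (csSup_mem_closure hne hbdd)
  · rwa [Real.sSup_of_not_bddAbove hbdd]

lemma exists_pos_le_and_one_le_exp_neg_mul_add (a : ℝ) {K : ℝ} (hK : 0 < K) :
    ∃ δ, 0 < δ ∧ δ ≤ K ∧ 1 ≤ exp (-(a * δ)) + exp (-(a * K)) := by
  have hnear : ∀ᶠ δ in 𝓝 (0 : ℝ), 1 < exp (-(a * δ)) + exp (-(a * K)) :=
    continuousAt_const.eventually_lt (by fun_prop) (by simp [exp_pos])
  obtain ⟨δ, hδ, hδ0, hδK⟩ :=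
    ((hnear.filter_mono nhdsWithin_le_nhds).and (Ioc_mem_nhdsGT hK)).exists
  exact ⟨δ, hδ0, hδK, hδ.le⟩

lemma one_le_sum_exp_neg_mul_max {ι : Type*} {s : Finset ι} (hs : s.Nontrivial) {x : ι → ℝ}
    {a δ K : ℝ} (ha : 0 ≤ a) (hxK : ∀ i ∈ s, x i ≤ K) (hδK : δ ≤ K)
    (hδ : 1 ≤ exp (-(a * δ)) + exp (-(a * K))) (hsum : 1 ≤ ∑ i ∈ s, exp (-(a * x i))) :
    1 ≤ ∑ i ∈ s, exp (-(a * max (x i) δ)) := by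
  by_cases h : ∀ i ∈ s, δ ≤ x i
  · exact hsum.trans_eq <| sum_congr rfl fun i hi => by rw [max_eq_left (h i hi)]
  push Not at h
  obtain ⟨i, hi, hxi⟩ := h
  obtain ⟨j, hj, hji⟩ := hs.exists_ne i
  calc 1 ≤ exp (-(a * δ)) + exp (-(a * K)) := hδ
    _ ≤ exp (-(a * max (x i) δ)) + exp (-(a * max (x j) δ)) := by
        rw [max_eq_right hxi.le]
        gcongr
        exact max_le (hxK j hj) hδK
    _ ≤ ∑ k ∈ s, exp (-(a * max (x k) δ)) :=
        add_le_sum (f := fun k => exp (-(a * max (x k) δ))) (fun _ _ => (exp_pos _).le) hi hj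
          hji.symm

/-- Replacing `x_i` by `max x_i δ` can only increase the product, as `φ` is antitone, and brings
every argument `t e^{-x_i}` back into `[e^{-K}, e^s]`. -/
lemma prod_le_ofReal_rpow_rpow {φ : ℝ → ℝ≥0∞} {K a q δ s t : ℝ} (ha : 0 ≤ a) (hq0 : 0 < q)
    (hq1 : q ≤ 1) (hφ : AntitoneOn φ (Ioi 0)) (hδK : δ ≤ K)
    (hδ : 1 ≤ exp (-(a * δ)) + exp (-(a * K)))
    (hbound : ∀ u, exp (-K) ≤ u → u ≤ exp s → φ u ≤ ENNReal.ofReal (q ^ u ^ a))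
    (ht1 : 1 ≤ t) (hts : t ≤ exp (s + δ)) {n : ℕ} {x : ℕ → ℝ} (hn : 2 ≤ n)
    (hxK : ∀ i < n, x i ≤ K) (hxa : 1 ≤ ∑ i ∈ range n, exp (-(a * x i))) :
    ∏ i ∈ range n, φ (t * exp (-(x i))) ≤ ENNReal.ofReal (q ^ t ^ a) := by
  have ht0 : 0 < t := one_pos.trans_le ht1
  have hchild : ∀ y ≤ K, φ (t * exp (-y)) ≤
      ENNReal.ofReal (q ^ (t ^ a * exp (-(a * max y δ)))) := fun y hyK => by
    have hmK : max y δ ≤ K := max_le hyK hδK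
    calc φ (t * exp (-y)) ≤ φ (t * exp (-max y δ)) :=
          hφ (mul_pos ht0 (exp_pos _)) (mul_pos ht0 (exp_pos _))
            (by gcongr; exact le_max_left _ _)
      _ ≤ ENNReal.ofReal (q ^ (t * exp (-max y δ)) ^ a) := by
          refine hbound _ ?_ ?_
          · calc exp (-K) = 1 * exp (-K) := (one_mul _).symm
              _ ≤ t * exp (-max y δ) := by gcongr
          · calc t * exp (-max y δ) ≤ exp (s + δ) * exp (-δ) := by
                  gcongr; exact le_max_right _ _
              _ = exp s := by rw [← exp_add, add_neg_cancel_right]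
      _ = ENNReal.ofReal (q ^ (t ^ a * exp (-(a * max y δ)))) := by
          rw [mul_rpow ht0.le (exp_pos _).le, ← exp_mul]
          ring_nf
  have hs : (range n).Nontrivial := ⟨0, by simp; omega, 1, by simp; omega, by simp⟩
  have hmax := one_le_sum_exp_neg_mul_max hs ha (fun i hi => hxK i (mem_range.1 hi)) hδK hδ hxa
  calc ∏ i ∈ range n, φ (t * exp (-(x i)))
      ≤ ∏ i ∈ range n, ENNReal.ofReal (q ^ (t ^ a * exp (-(a * max (x i) δ)))) :=
        prod_le_prod' fun i hi => hchild _ (hxK i (mem_range.1 hi))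
    _ = ENNReal.ofReal (q ^ (t ^ a * ∑ i ∈ range n, exp (-(a * max (x i) δ)))) := by
        rw [mul_sum, rpow_sum_of_pos hq0,
          ENNReal.ofReal_prod_of_nonneg fun _ _ => (rpow_pos_of_pos hq0 _).le]
    _ ≤ ENNReal.ofReal (q ^ t ^ a) := ENNReal.ofReal_le_ofReal <|
        rpow_le_rpow_of_exponent_ge hq0 hq1 <| le_mul_of_one_le_right (by positivity) hmax

theorem le_ofReal_rpow_rpow_of_le_lintegral_prod {α : Type*} [MeasurableSpace α]
    {P : Measure α} [IsProbabilityMeasure P] {N : α → ℕ} {X : α → ℕ → ℝ} {φ : ℝ → ℝ≥0∞}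
    {K a q : ℝ} (hK : 0 < K) (ha : 0 ≤ a) (hq0 : 0 < q) (hq1 : q ≤ 1)
    (hφ : AntitoneOn φ (Ioi 0))
    (hrec : ∀ t, 1 < t → φ t ≤ ∫⁻ ω, ∏ i ∈ range (N ω), φ (t * exp (-(X ω i))) ∂P)
    (hN : ∀ᵐ ω ∂P, 2 ≤ N ω) (hXK : ∀ᵐ ω ∂P, ∀ i < N ω, X ω i ≤ K)
    (hXa : ∀ᵐ ω ∂P, 1 ≤ ∑ i ∈ range (N ω), exp (-(a * X ω i)))
    (hφK : φ (exp (-K)) ≤ ENNReal.ofReal q) {r : ℝ} (hr : exp (-K) ≤ r) :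
    φ r ≤ ENNReal.ofReal (q ^ r ^ a) := by
  obtain ⟨δ, hδ0, hδK, hδ⟩ := exists_pos_le_and_one_le_exp_neg_mul_add a hK
  suffices H : ∀ n : ℕ, ∀ t, exp (-K) ≤ t → t ≤ exp (n * δ) →
      φ t ≤ ENNReal.ofReal (q ^ t ^ a) by
    obtain ⟨n, hn⟩ := exists_nat_ge (log r / δ)
    refine H n r hr ?_
    calc r = exp (log r) := (exp_log ((exp_pos _).trans_le hr)).symm
      _ ≤ exp (n * δ) := exp_le_exp.2 ((div_le_iff₀ hδ0).1 hn)
  intro n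
  induction n with
  | zero =>
    intro t htK ht1
    have ht0 : 0 < t := (exp_pos _).trans_le htK
    rw [CharP.cast_eq_zero, zero_mul, exp_zero] at ht1
    calc φ t ≤ φ (exp (-K)) := hφ (exp_pos _) ht0 htK
      _ ≤ ENNReal.ofReal q := hφK
      _ ≤ ENNReal.ofReal (q ^ t ^ a) := ENNReal.ofReal_le_ofReal <| by
          simpa using rpow_le_rpow_of_exponent_ge hq0 hq1 (rpow_le_one ht0.le ht1 ha)
  | succ n ih =>
    intro t htK ht
    rcases le_or_gt t (exp (n * δ)) with hle | hlt
    · exact ih t htK hle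
    have ht1 : 1 < t := (one_le_exp (by positivity)).trans_lt hlt
    calc φ t ≤ ∫⁻ ω, ∏ i ∈ range (N ω), φ (t * exp (-(X ω i))) ∂P := hrec t ht1
      _ ≤ ∫⁻ _, ENNReal.ofReal (q ^ t ^ a) ∂P := lintegral_mono_ae <| by
          filter_upwards [hN, hXK, hXa] with ω hNω hKω haω
          exact prod_le_ofReal_rpow_rpow ha hq0 hq1 hφ hδK hδ ih ht1.le
            (by rwa [← add_one_mul, ← Nat.cast_succ]) hNω hKω haω
      _ = ENNReal.ofReal (q ^ t ^ a) := by simp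

def laplace (μ : Measure ℝ) (t : ℝ) : ℝ≥0∞ :=
  ∫⁻ z, ENNReal.ofReal (exp (-(t * z))) ∂μ

lemma integral_exp_neg_mul_eq_toReal_laplace (μ : Measure ℝ) (t : ℝ) :
    ∫ z, exp (-(t * z)) ∂μ = (laplace μ t).toReal :=
  integral_eq_lintegral_of_nonneg_ae (.of_forall fun _ => (exp_pos _).le) (by fun_prop)

section Laplace

variable {μ : Measure ℝ}

lemma antitoneOn_laplace (hμ : ∀ᵐ z ∂μ, 0 ≤ z) : AntitoneOn (laplace μ) (Ici 0) :=
  fun _ _ _ _ hst => lintegral_mono_ae <| hμ.mono fun _ hz =>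
    ENNReal.ofReal_le_ofReal <| exp_le_exp.2 <| neg_le_neg <| mul_le_mul_of_nonneg_right hst hz

variable [IsProbabilityMeasure μ] {t : ℝ}

lemma laplace_le_one (hμ : ∀ᵐ z ∂μ, 0 ≤ z) (ht : 0 ≤ t) : laplace μ t ≤ 1 := by
  simpa [laplace] using antitoneOn_laplace hμ (mem_Ici.2 le_rfl) ht ht

lemma laplace_pos : 0 < laplace μ t := by
  rw [laplace, lintegral_pos_iff_support (by fun_prop)]
  simp [Function.support, exp_pos]

lemma ofReal_integral_exp_neg_mul (hμ : ∀ᵐ z ∂μ, 0 ≤ z) (ht : 0 ≤ t) :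
    ENNReal.ofReal (∫ z, exp (-(t * z)) ∂μ) = laplace μ t := by
  rw [integral_exp_neg_mul_eq_toReal_laplace,
    ENNReal.ofReal_toReal (ne_top_of_le_ne_top ENNReal.one_ne_top (laplace_le_one hμ ht))]

lemma integral_exp_neg_mul_pos (hμ : ∀ᵐ z ∂μ, 0 ≤ z) (ht : 0 ≤ t) :
    0 < ∫ z, exp (-(t * z)) ∂μ := by
  rw [integral_exp_neg_mul_eq_toReal_laplace]
  exact ENNReal.toReal_pos laplace_pos.ne'
    (ne_top_of_le_ne_top ENNReal.one_ne_top (laplace_le_one hμ ht))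

lemma integral_exp_neg_mul_le_one (hμ : ∀ᵐ z ∂μ, 0 ≤ z) (ht : 0 ≤ t) :
    ∫ z, exp (-(t * z)) ∂μ ≤ 1 := by
  rw [integral_exp_neg_mul_eq_toReal_laplace]
  exact ENNReal.toReal_le_of_le_ofReal zero_le_one
    (ENNReal.ofReal_one.symm ▸ laplace_le_one hμ ht)

end Laplace

/-- The right-hand side `Σ_{|u|=1} e^{-V(u)} Z^{(u)}` of the smoothing transform, for a first
generation `p = (ν, X)` and copies `z i` of `Z`. -/
def cascadeSum (p : ℕ∞ × (ℕ → ℝ)) (z : ℕ → ℝ) : ℝ :=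
  ∑' i : ℕ, if (i : ℕ∞) < p.1 then exp (-(p.2 i)) * z i else 0

lemma measurable_cascadeSum : Measurable (Function.uncurry cascadeSum) := by
  refine Measurable.tsum fun i => Measurable.ite ?_ (by fun_prop) measurable_const
  exact measurable_fst.fst (MeasurableSet.of_discrete (s := {n : ℕ∞ | (i : ℕ∞) < n}))

lemma cascadeSum_natCast (n : ℕ) (x z : ℕ → ℝ) :
    cascadeSum (n, x) z = ∑ i ∈ range n, exp (-(x i)) * z i := by
  rw [cascadeSum, tsum_eq_sum (s := range n) fun i hi => by simp_all]
  exact sum_congr rfl fun i hi => by simp_all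

lemma lintegral_exp_neg_mul_cascadeSum (μ : Measure ℝ) [IsProbabilityMeasure μ] (t : ℝ) (n : ℕ)
    (x : ℕ → ℝ) :
    ∫⁻ z, ENNReal.ofReal (exp (-(t * cascadeSum (n, x) z))) ∂Measure.infinitePi (fun _ => μ) =
      ∏ i ∈ range n, laplace μ (t * exp (-(x i))) := by
  set f : ℕ → ℝ → ℝ≥0∞ := fun i y => ENNReal.ofReal (exp (-(t * exp (-(x i)) * y)))
  have hf : ∀ i, Measurable (f i) := fun i => by fun_prop
  have hprod : ∀ z : ℕ → ℝ, ENNReal.ofReal (exp (-(t * cascadeSum (n, x) z))) =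
      ∏ i ∈ range n, f i (z i) := fun z => by
    rw [cascadeSum_natCast, ← ENNReal.ofReal_prod_of_nonneg fun _ _ => (exp_pos _).le, ← exp_sum,
      mul_sum, ← sum_neg_distrib]
    simp only [mul_assoc]
  simp_rw [hprod]
  rw [ProbabilityTheory.lintegral_prod_eq_prod_lintegral_of_indepFun _ _
    (ProbabilityTheory.iIndepFun_infinitePi hf) fun i => (hf i).comp (measurable_pi_apply i)]
  refine prod_congr rfl fun i _ => ?_
  rw [← lintegral_map (hf i) (measurable_pi_apply i), Measure.infinitePi_map_eval]
  simp only [f, laplace, mul_assoc]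

namespace BRW

variable {Ω : Type} [MeasurableSpace Ω] (b : BRW Ω)

lemma measurable_firstGen : Measurable fun ω => (b.ν [] ω, b.X [] ω) :=
  (b.meas_ν []).prodMk (measurable_pi_lambda _ (b.meas_X []))

instance : IsProbabilityMeasure b.firstGenLaw :=
  haveI := b.isProb
  Measure.isProbabilityMeasure_map b.measurable_firstGen.aemeasurable

lemma measurable_lsum1 {f : ℝ → ℝ≥0∞} (hf : Measurable f) : Measurable (b.lsum1 f) :=
  Measurable.tsum fun i =>
    Measurable.ite (b.meas_ν [] (MeasurableSet.of_discrete (s := {n : ℕ∞ | (i : ℕ∞) < n})))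
      (hf.comp (b.meas_X [] i)) measurable_const

lemma lsum1_eq_sum {ω : Ω} (hω : b.ν [] ω ≠ ⊤) (f : ℝ → ℝ≥0∞) :
    b.lsum1 f ω = ∑ i ∈ range (b.ν [] ω).toNat, f (b.X [] ω i) := by
  rw [lsum1, tsum_eq_sum (s := range (b.ν [] ω).toNat)]
  · exact sum_congr rfl fun i hi =>
      if_pos ((ENat.natCast_lt_iff_lt_toNat hω i).2 (mem_range.1 hi))
  · exact fun i hi => if_neg (by simpa [ENat.natCast_lt_iff_lt_toNat hω] using hi)

variable {b} {K : ℝ} {μ : Measure ℝ}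

/-- Infinitely many children below `K` would make `Σ_{|u|=1} e^{-χ V(u)}` infinite. -/
lemma ae_ne_top {χ : ℝ} (h110 : b.Cond110 χ) (hBo : b.Boettcher K) :
    ∀ᵐ ω ∂b.P, b.ν [] ω ≠ ⊤ := by
  have hlt : ∀ᵐ ω ∂b.P, b.lsum1 (fun x => ENNReal.ofReal (exp (-(χ * x)))) ω < ⊤ :=
    ae_lt_top (b.measurable_lsum1 (by fun_prop))
      (ne_top_of_le_ne_top ENNReal.one_ne_top h110.2.2.1)
  filter_upwards [hlt, hBo.2.2.2] with ω hω hXK htop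
  refine hω.ne (top_unique ?_)
  calc ⊤ = ∑' _ : ℕ, ENNReal.ofReal (exp (-(χ * K))) :=
        (ENNReal.tsum_const_eq_top_of_ne_zero (by simp [exp_pos])).symm
    _ ≤ b.lsum1 (fun x => ENNReal.ofReal (exp (-(χ * x)))) ω :=
        ENNReal.tsum_le_tsum fun i => by
          have hi : (i : ℕ∞) < b.ν [] ω := htop ▸ ENat.natCast_lt_top i
          rw [if_pos hi]
          exact ENNReal.ofReal_le_ofReal <| exp_le_exp.2 <| neg_le_neg <|
            mul_le_mul_of_nonneg_left (hXK i hi) h110.1.le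

lemma ae_two_le_toNat (hBo : b.Boettcher K) (hfin : ∀ᵐ ω ∂b.P, b.ν [] ω ≠ ⊤) :
    ∀ᵐ ω ∂b.P, 2 ≤ (b.ν [] ω).toNat := by
  have h0 : ∀ᵐ ω ∂b.P, b.ν [] ω ≠ 0 := by simpa [ae_iff] using hBo.1
  have h1 : ∀ᵐ ω ∂b.P, b.ν [] ω ≠ 1 := by simpa [ae_iff] using hBo.2.1
  filter_upwards [h0, h1, hfin] with ω h0 h1 htop
  lift b.ν [] ω to ℕ using htop with n
  simp only [ne_eq, Nat.cast_eq_zero, Nat.cast_eq_one] at h0 h1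
  simp only [ENat.toNat_natCast]
  omega

lemma ae_le_of_lt_toNat (hBo : b.Boettcher K) (hfin : ∀ᵐ ω ∂b.P, b.ν [] ω ≠ ⊤) :
    ∀ᵐ ω ∂b.P, ∀ i < (b.ν [] ω).toNat, b.X [] ω i ≤ K := by
  filter_upwards [hBo.2.2.2, hfin] with ω hXK hω i hi
  exact hXK i ((ENat.natCast_lt_iff_lt_toNat hω i).2 hi)

lemma ae_one_le_sum_of_prob_eq_one (hfin : ∀ᵐ ω ∂b.P, b.ν [] ω ≠ ⊤) {a : ℝ}
    (ha : b.P {ω | 1 ≤ b.lsum1 (fun x => ENNReal.ofReal (exp (-(a * x)))) ω} = 1) :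
    ∀ᵐ ω ∂b.P, 1 ≤ ∑ i ∈ range (b.ν [] ω).toNat, exp (-(a * b.X [] ω i)) := by
  have := b.isProb
  have hmeas : MeasurableSet {ω | 1 ≤ b.lsum1 (fun x => ENNReal.ofReal (exp (-(a * x)))) ω} :=
    measurableSet_le measurable_const (b.measurable_lsum1 (by fun_prop))
  have hone := (ae_iff_measure_eq hmeas.nullMeasurableSet).2 (by rw [ha, measure_univ])
  filter_upwards [hone, hfin] with ω h hω
  rwa [lsum1_eq_sum b hω, ← ENNReal.ofReal_sum_of_nonneg fun _ _ => (exp_pos _).le,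
    ENNReal.one_le_ofReal] at h

lemma IsCascadeSolution.ae_nonneg (hZ : b.IsCascadeSolution μ) : ∀ᵐ z ∂μ, 0 ≤ z := by
  simpa [ae_iff] using hZ.2.1

theorem IsCascadeSolution.map_cascadeSum (hZ : b.IsCascadeSolution μ) :
    (b.firstGenLaw.prod (Measure.infinitePi fun _ : ℕ => μ)).map (Function.uncurry cascadeSum) =
      μ := by
  obtain ⟨hμ, -, -, Ω', _, P', ν', X', Z, hP', hlaw, hZlaw, hZind, hindep, hfix⟩ := hZ
  have hW : AEMeasurable (fun ω => (ν' ω, X' ω)) P' :=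
    .of_map_ne_zero (by rw [hlaw]; exact IsProbabilityMeasure.ne_zero _)
  have hZm : ∀ i, AEMeasurable (Z i) P' :=
    fun i => .of_map_ne_zero (by rw [hZlaw i]; exact IsProbabilityMeasure.ne_zero _)
  have hZv : P'.map (fun ω i => Z i ω) = Measure.infinitePi fun _ => μ := by
    rw [hZind.map_fun_eq_infinitePi_map₀' hZm]
    simp only [hZlaw]
  have hjoint : P'.map (fun ω => ((ν' ω, X' ω), fun i => Z i ω)) =
      b.firstGenLaw.prod (Measure.infinitePi fun _ => μ) := by
    rw [(indepFun_iff_map_prod_eq_prod_map_map hW (aemeasurable_pi_lambda _ hZm)).1 hindep, hlaw,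
      hZv]
  rw [← hjoint, AEMeasurable.map_map_of_aemeasurable measurable_cascadeSum.aemeasurable
    (hW.prodMk (aemeasurable_pi_lambda _ hZm))]
  exact hfix

theorem IsCascadeSolution.laplace_eq (hZ : b.IsCascadeSolution μ)
    (hfin : ∀ᵐ ω ∂b.P, b.ν [] ω ≠ ⊤) (t : ℝ) :
    laplace μ t =
      ∫⁻ ω, ∏ i ∈ range (b.ν [] ω).toNat, laplace μ (t * exp (-(b.X [] ω i))) ∂b.P := by
  have := hZ.1
  have hG : Measurable fun q : (ℕ∞ × (ℕ → ℝ)) × (ℕ → ℝ) =>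
      ENNReal.ofReal (exp (-(t * Function.uncurry cascadeSum q))) := by
    have := measurable_cascadeSum
    fun_prop
  calc laplace μ t
      = ∫⁻ q, ENNReal.ofReal (exp (-(t * Function.uncurry cascadeSum q)))
          ∂b.firstGenLaw.prod (Measure.infinitePi fun _ => μ) := by
        conv_lhs => rw [laplace, ← hZ.map_cascadeSum]
        exact lintegral_map (by fun_prop) measurable_cascadeSum
    _ = ∫⁻ ω, ∫⁻ z, ENNReal.ofReal (exp (-(t * cascadeSum (b.ν [] ω, b.X [] ω) z)))
          ∂Measure.infinitePi (fun _ => μ) ∂b.P := by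
        rw [lintegral_prod _ hG.aemeasurable, firstGenLaw,
          lintegral_map hG.lintegral_prod_right' b.measurable_firstGen]
        rfl
    _ = _ := lintegral_congr_ae <| hfin.mono fun ω hω => by
        simpa only [ENat.natCast_toNat hω] using
          lintegral_exp_neg_mul_cascadeSum μ t (b.ν [] ω).toNat (b.X [] ω)

theorem IsCascadeSolution.integral_exp_neg_mul_le_rpow {χ : ℝ} (h110 : b.Cond110 χ)
    (hBo : b.Boettcher K) (hZ : b.IsCascadeSolution μ) {a : ℝ} (ha : 0 ≤ a)
    (hXa : ∀ᵐ ω ∂b.P, 1 ≤ ∑ i ∈ range (b.ν [] ω).toNat, exp (-(a * b.X [] ω i)))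
    {r : ℝ} (hr : exp (-K) ≤ r) :
    ∫ x, exp (-(r * x)) ∂μ ≤ (∫ x, exp (-(exp (-K) * x)) ∂μ) ^ r ^ a := by
  have := b.isProb
  have := hZ.1
  have hfin := ae_ne_top h110 hBo
  have hK := (exp_pos (-K)).le
  have hq0 := integral_exp_neg_mul_pos hZ.ae_nonneg hK
  rw [integral_exp_neg_mul_eq_toReal_laplace]
  exact ENNReal.toReal_le_of_le_ofReal (rpow_pos_of_pos hq0 _).le <|
    le_ofReal_rpow_rpow_of_le_lintegral_prod hBo.2.2.1 ha hq0
      (integral_exp_neg_mul_le_one hZ.ae_nonneg hK)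
      ((antitoneOn_laplace hZ.ae_nonneg).mono Ioi_subset_Ici_self)
      (fun t _ => (hZ.laplace_eq hfin t).le) (ae_two_le_toNat hBo hfin)
      (ae_le_of_lt_toNat hBo hfin) hXa (ofReal_integral_exp_neg_mul hZ.ae_nonneg hK).ge hr

end BRW

/-- **(3.17).**  Assume (1.10) and the Böttcher case conditions, and let `Z ≥ 0` be a
non-trivial solution of the cascade equation with Laplace exponent
`h(t) = −log E[e^{-tZ}]`.  Then for every `r > 1`:
`E[e^{-rZ}] ≤ exp(−h(e^{-K}) r^β)`. -/
theorem statement9 {Ω : Type} [MeasurableSpace Ω] (b : BRW Ω) (χ K : ℝ)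
    (h110 : b.Cond110 χ) (hBo : b.Boettcher K)
    (μ : Measure ℝ) (hZ : b.IsCascadeSolution μ) :
    ∀ r : ℝ, 1 < r →
      ∫ x, Real.exp (-(r * x)) ∂μ ≤
        Real.exp (-((-Real.log (∫ x, Real.exp (-(Real.exp (-K) * x)) ∂μ)) *
          r ^ b.betaParam)) := by
  intro r hr
  have := hZ.1
  set q := ∫ x, exp (-(exp (-K) * x)) ∂μ
  have hq0 : 0 < q := integral_exp_neg_mul_pos hZ.ae_nonneg (exp_pos _).le
  have hbound : ∀ a, 0 ≤ a → (∀ᵐ ω ∂b.P, 1 ≤ ∑ i ∈ range (b.ν [] ω).toNat,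
      exp (-(a * b.X [] ω i))) → ∫ x, exp (-(r * x)) ∂μ ≤ q ^ r ^ a := fun a ha hXa =>
    hZ.integral_exp_neg_mul_le_rpow h110 hBo ha hXa
      (by linarith [exp_lt_one_iff.2 (neg_lt_zero.2 hBo.2.2.1)])
  have hcont : Continuous fun a : ℝ => q ^ r ^ a :=
    continuous_const.rpow (continuous_const.rpow continuous_id fun _ => Or.inl (by positivity))
      fun _ => Or.inl hq0.ne'
  have hfin := BRW.ae_ne_top h110 hBo
  rw [neg_mul, neg_neg, ← rpow_def_of_pos hq0]
  -- `0 ∈ C` covers the junk value `sSup = 0` of an empty or unbounded set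
  refine Real.sSup_mem_of_isClosed (C := {a | ∫ x, exp (-(r * x)) ∂μ ≤ q ^ r ^ a})
    (isClosed_le continuous_const hcont)
    (fun a ha => hbound a ha.1.le (BRW.ae_one_le_sum_of_prob_eq_one hfin ha.2))
    (hbound 0 le_rfl ?_)
  filter_upwards [BRW.ae_two_le_toNat hBo hfin] with ω hω
  simp only [zero_mul, neg_zero, exp_zero, sum_const, card_range, nsmul_eq_mul, mul_one]
  exact_mod_cast (by omega : 1 ≤ (b.ν [] ω).toNat)
end
end
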